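/- arXiv:1804.00442 — 5 statements merged into one kernel-verified Lean document; each statement's English description precedes it below -/
import Mathlib

section
/- Let $L$ be a random variable on a probability space $(\Omega,\mathcal{A},\mathbb{P})$ taking finitely many values $x_1,\dots,x_n$ each with strictly positive probability, and let $\mathcal{F}$ be a sub-$\sigma$-field. Define $q^x := \mathbb{P}(L=x\,|\,\mathcal{F})/\mathbb{P}(L=x)$. Then $\mathbb{E}[1/q^L \cdot \mathbf{1}_{\{q^L>0\}}] = \sum_{i=1}^n \mathbb{P}(q^{x_i}>0)\,\mathbb{P}(L=x_i)$. -/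
open MeasureTheory ProbabilityTheory

lemma value_info_key
    {Ω : Type*} (m : MeasurableSpace Ω) {m0 : MeasurableSpace Ω} (μ : Measure Ω)
    [IsProbabilityMeasure μ] (hm : m ≤ m0)
    (s : Set Ω) (hs : MeasurableSet[m0] s) {p : ℝ} (hp : 0 < p)
    (hps : (μ s).toReal = p) (q : Ω → ℝ)
    (hq : q = fun ω => (μ[Set.indicator s (fun _ => (1 : ℝ)) | m]) ω / p) :
    Integrable (fun ω => Set.indicator {ω' | 0 < q ω'} (fun ω' => (q ω')⁻¹) ω
        * Set.indicator s (fun _ => (1:ℝ)) ω) μ ∧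
    ∫ ω, Set.indicator {ω' | 0 < q ω'} (fun ω' => (q ω')⁻¹) ω
        * Set.indicator s (fun _ => (1:ℝ)) ω ∂μ
      = (μ {ω | 0 < q ω}).toReal * p := by
  have hmP : SigmaFinite (μ.trim hm) := inferInstance
  set c : Ω → ℝ := μ[Set.indicator s (fun _ => (1 : ℝ)) | m] with hc_def
  have hqm : Measurable[m] q := by
    rw [hq]; exact stronglyMeasurable_condExp.measurable.div_const p
  set S : Set Ω := {ω | 0 < q ω} with hS_def
  have hSm : MeasurableSet[m] S := measurableSet_lt measurable_const hqm
  have hSm0 : MeasurableSet[m0] S := hm _ hSm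
  set f : Ω → ℝ := Set.indicator S (fun ω => (q ω)⁻¹) with hf_def
  have hfm : Measurable[m] f := (hqm.inv).indicator hSm
  have hfm0 : Measurable[m0] f := ((hqm.inv).indicator hSm).mono hm le_rfl
  have hf_nonneg : ∀ ω, 0 ≤ f ω := by
    intro ω
    by_cases hω : 0 < q ω
    · have hmem : ω ∈ S := hω
      rw [hf_def, Set.indicator_of_mem hmem]
      exact (inv_pos.2 hω).le
    · have hmem : ω ∉ S := hω
      rw [hf_def, Set.indicator_of_notMem hmem]
  have hc : ∀ ω, c ω = q ω * p := by
    intro ω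
    rw [hq]
    field_simp
  have hfc : ∀ ω, f ω * c ω = Set.indicator S (fun _ => p) ω := by
    intro ω
    by_cases hω : 0 < q ω
    · have hmem : ω ∈ S := hω
      have hq0 : q ω ≠ 0 := ne_of_gt hω
      rw [hf_def, Set.indicator_of_mem hmem, Set.indicator_of_mem hmem, hc ω,
        ← mul_assoc, inv_mul_cancel₀ hq0, one_mul]
    · have hmem : ω ∉ S := hω
      rw [hf_def, Set.indicator_of_notMem hmem, Set.indicator_of_notMem hmem, zero_mul]
  have hind_int : Integrable (Set.indicator s (fun _ => (1:ℝ))) μ := by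
    exact Integrable.indicator (integrable_const (1:ℝ)) hs
  have hind_meas : Measurable[m0] (Set.indicator s (fun _ => (1:ℝ))) :=
    measurable_const.indicator hs
  have hc_int : Integrable c μ := integrable_condExp
  have hc_nonneg : 0 ≤ᵐ[μ] c :=
    condExp_nonneg (Filter.Eventually.of_forall fun ω => Set.indicator_nonneg (fun _ _ => zero_le_one) ω)
  -- truncations
  set fn : ℕ → Ω → ℝ := fun n ω => min (f ω) n with hfn_def
  have hfn_nonneg : ∀ n ω, 0 ≤ fn n ω := fun n ω => le_min (hf_nonneg ω) (n.cast_nonneg)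
  have hfn_le : ∀ n ω, fn n ω ≤ f ω := fun n ω => min_le_left _ _
  have hfn_bdd : ∀ n ω, ‖fn n ω‖ ≤ n := by
    intro n ω
    rw [Real.norm_of_nonneg (hfn_nonneg n ω)]
    exact min_le_right _ _
  have hfnm : ∀ n, Measurable[m] (fn n) := fun n => hfm.min measurable_const
  have hfnm0 : ∀ n, Measurable[m0] (fn n) := fun n => (hfnm n).mono hm le_rfl
  have hfn_int : ∀ n, Integrable (fn n * Set.indicator s fun _ => (1:ℝ)) μ := by
    intro n
    refine Integrable.bdd_mul hind_int (hfnm0 n).aestronglyMeasurable (μ := μ) (Filter.Eventually.of_forall (hfn_bdd n))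
  -- pull-out at level n
  have hpull : ∀ n, ∫ ω, (fn n * Set.indicator s fun _ => (1:ℝ)) ω ∂μ
      = ∫ ω, fn n ω * c ω ∂μ := by
    intro n
    have h1 := condExp_mul_of_stronglyMeasurable_left (μ := μ) (hfnm n).stronglyMeasurable
      (hfn_int n) hind_int
    calc ∫ ω, (fn n * Set.indicator s fun _ => (1:ℝ)) ω ∂μ
        = ∫ ω, (μ[fn n * Set.indicator s fun _ => (1:ℝ)|m]) ω ∂μ :=
          (integral_condExp hm).symm
      _ = ∫ ω, fn n ω * c ω ∂μ := integral_congr_ae h1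
  have hfnc_int : ∀ n, Integrable (fun ω => fn n ω * c ω) μ := by
    intro n
    exact Integrable.bdd_mul hc_int (hfnm0 n).aestronglyMeasurable (μ := μ) (Filter.Eventually.of_forall (hfn_bdd n))
  have hSind_int : Integrable (Set.indicator S (fun _ => p)) μ := by
    exact Integrable.indicator (integrable_const p) hSm0
  have hbound : ∀ n, ∫ ω, fn n ω * c ω ∂μ ≤ p * (μ S).toReal := by
    intro n
    have h1 : ∫ ω, fn n ω * c ω ∂μ ≤ ∫ ω, Set.indicator S (fun _ => p) ω ∂μ := by
      refine integral_mono_ae (hfnc_int n) hSind_int ?_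
      filter_upwards [hc_nonneg] with ω hcω
      calc fn n ω * c ω ≤ f ω * c ω := mul_le_mul_of_nonneg_right (hfn_le n ω) hcω
        _ = Set.indicator S (fun _ => p) ω := hfc ω
    calc ∫ ω, fn n ω * c ω ∂μ ≤ ∫ ω, Set.indicator S (fun _ => p) ω ∂μ := h1
      _ = (μ S).toReal • p := integral_indicator_const (μ := μ) p hSm0
      _ = p * (μ S).toReal := by rw [smul_eq_mul, mul_comm]
  -- integrability of f * indicator via MCT
  have hprod_nonneg : ∀ ω, 0 ≤ f ω * Set.indicator s (fun _ => (1:ℝ)) ω := fun ω =>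
    mul_nonneg (hf_nonneg ω) (Set.indicator_nonneg (fun _ _ => zero_le_one) ω)
  have hfprod_meas : Measurable[m0] (fun ω => f ω * Set.indicator s (fun _ => (1:ℝ)) ω) :=
    hfm0.mul (hind_meas)
  have hint : Integrable (fun ω => f ω * Set.indicator s (fun _ => (1:ℝ)) ω) μ := by
    refine ⟨hfprod_meas.aestronglyMeasurable (μ := μ), ?_⟩
    rw [hasFiniteIntegral_iff_ofReal (Filter.Eventually.of_forall hprod_nonneg)]
    have hsup : ∀ ω, (⨆ n : ℕ, ENNReal.ofReal (fn n ω * Set.indicator s (fun _ => (1:ℝ)) ω))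
        = ENNReal.ofReal (f ω * Set.indicator s (fun _ => (1:ℝ)) ω) := by
      intro ω
      refine le_antisymm (iSup_le fun n => ENNReal.ofReal_le_ofReal
        (mul_le_mul_of_nonneg_right (hfn_le n ω)
          (Set.indicator_nonneg (fun _ _ => zero_le_one) ω))) ?_
      have : fn ⌈f ω⌉₊ ω = f ω := min_eq_left (Nat.le_ceil _)
      exact le_iSup_of_le ⌈f ω⌉₊ (by rw [this])
    calc ∫⁻ ω, ENNReal.ofReal (f ω * Set.indicator s (fun _ => (1:ℝ)) ω) ∂μ
        = ∫⁻ ω, ⨆ n : ℕ, ENNReal.ofReal (fn n ω * Set.indicator s (fun _ => (1:ℝ)) ω) ∂μ := by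
          simp_rw [hsup]
      _ = ⨆ n : ℕ, ∫⁻ ω, ENNReal.ofReal (fn n ω * Set.indicator s (fun _ => (1:ℝ)) ω) ∂μ := by
          refine lintegral_iSup (fun n => ENNReal.measurable_ofReal.comp
            ((hfnm0 n).mul (hind_meas))) ?_
          intro n k hnk ω
          exact ENNReal.ofReal_le_ofReal (mul_le_mul_of_nonneg_right
            (min_le_min le_rfl (Nat.cast_le.2 hnk))
            (Set.indicator_nonneg (fun _ _ => zero_le_one) ω))
      _ ≤ ENNReal.ofReal (p * (μ S).toReal) := by
          refine iSup_le fun n => ?_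
          have heq := ofReal_integral_eq_lintegral_ofReal (hfn_int n)
            (Filter.Eventually.of_forall fun ω => mul_nonneg (hfn_nonneg n ω)
              (Set.indicator_nonneg (fun _ _ => zero_le_one) ω))
          refine le_trans (le_of_eq ?_) (ENNReal.ofReal_le_ofReal ((hpull n).le.trans (hbound n)))
          exact heq.symm
      _ < ⊤ := ENNReal.ofReal_lt_top
  refine ⟨hint, ?_⟩
  have h1 := condExp_mul_of_stronglyMeasurable_left (μ := μ) hfm.stronglyMeasurable hint hind_int
  calc ∫ ω, f ω * Set.indicator s (fun _ => (1:ℝ)) ω ∂μ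
      = ∫ ω, (μ[f * Set.indicator s fun _ => (1:ℝ)|m]) ω ∂μ := (integral_condExp hm).symm
    _ = ∫ ω, f ω * c ω ∂μ := integral_congr_ae h1
    _ = ∫ ω, Set.indicator S (fun _ => p) ω ∂μ := by simp_rw [hfc]
    _ = (μ S).toReal • p := integral_indicator_const (μ := μ) p hSm0
    _ = (μ S).toReal * p := by rw [smul_eq_mul]

/-- For a discrete random variable `L` with finitely many values, all of
strictly positive probability, and a sub-σ-field `m` (representing `𝓕`), with
`q^x = P(L = x | 𝓕) / P(L = x)`, one has
`E[(1/q^L) · 1_{q^L > 0}] = ∑ x, P(q^x > 0) · P(L = x)`. -/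
theorem value_info_stmt0
    {Ω : Type*} (m : MeasurableSpace Ω) {m0 : MeasurableSpace Ω} (μ : Measure Ω) [IsProbabilityMeasure μ]
    (hm : m ≤ m0)
    {E : Type*} [Fintype E] [MeasurableSpace E] [MeasurableSingletonClass E]
    (L : Ω → E) (hL : Measurable L)
    (hpos : ∀ x : E, 0 < μ {ω | L ω = x})
    (q : E → Ω → ℝ)
    (hq : ∀ x : E, q x =
      fun ω => (μ[Set.indicator {ω' | L ω' = x} (fun _ => (1 : ℝ)) | m]) ω
        / (μ {ω' | L ω' = x}).toReal) :
    ∫ ω, Set.indicator {ω' | 0 < q (L ω') ω'} (fun ω' => (q (L ω') ω')⁻¹) ω ∂μ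
      = ∑ x : E, (μ {ω | 0 < q x ω}).toReal * (μ {ω | L ω = x}).toReal := by
  have key : ∀ x : E,
      Integrable (fun ω => Set.indicator {ω' | 0 < q x ω'} (fun ω' => (q x ω')⁻¹) ω
          * Set.indicator {ω' | L ω' = x} (fun _ => (1:ℝ)) ω) μ ∧
      ∫ ω, Set.indicator {ω' | 0 < q x ω'} (fun ω' => (q x ω')⁻¹) ω
          * Set.indicator {ω' | L ω' = x} (fun _ => (1:ℝ)) ω ∂μ
        = (μ {ω | 0 < q x ω}).toReal * (μ {ω' | L ω' = x}).toReal := by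
    intro x
    have hs : MeasurableSet[m0] {ω' | L ω' = x} := hL (MeasurableSet.singleton x)
    have hp : 0 < (μ {ω' | L ω' = x}).toReal :=
      ENNReal.toReal_pos (hpos x).ne' (measure_ne_top μ _)
    exact value_info_key m μ hm {ω' | L ω' = x} hs hp rfl (q x) (hq x)
  have hpt : ∀ ω, Set.indicator {ω' | 0 < q (L ω') ω'} (fun ω' => (q (L ω') ω')⁻¹) ω
      = ∑ x : E, Set.indicator {ω' | 0 < q x ω'} (fun ω' => (q x ω')⁻¹) ω
          * Set.indicator {ω' | L ω' = x} (fun _ => (1:ℝ)) ω := by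
    intro ω
    rw [Finset.sum_eq_single (L ω)]
    · simp [Set.indicator_apply, Set.mem_setOf_eq]
    · intro b _ hb
      have hmem : ω ∉ {ω' | L ω' = b} := by
        intro h
        exact hb (Eq.symm h)
      rw [Set.indicator_of_notMem hmem, mul_zero]
    · intro h
      exact absurd (Finset.mem_univ _) h
  calc ∫ ω, Set.indicator {ω' | 0 < q (L ω') ω'} (fun ω' => (q (L ω') ω')⁻¹) ω ∂μ
      = ∫ ω, ∑ x : E, Set.indicator {ω' | 0 < q x ω'} (fun ω' => (q x ω')⁻¹) ω
          * Set.indicator {ω' | L ω' = x} (fun _ => (1:ℝ)) ω ∂μ := by simp_rw [hpt]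
    _ = ∑ x : E, ∫ ω, Set.indicator {ω' | 0 < q x ω'} (fun ω' => (q x ω')⁻¹) ω
          * Set.indicator {ω' | L ω' = x} (fun _ => (1:ℝ)) ω ∂μ :=
        integral_finset_sum _ (fun x _ => (key x).1)
    _ = ∑ x : E, (μ {ω | 0 < q x ω}).toReal * (μ {ω | L ω = x}).toReal :=
        Finset.sum_congr rfl fun x _ => (key x).2
end

section
/- Let $Z$ be a strictly positive integrable random variable and $\alpha>0$. Define $g(\lambda) := \tfrac{1}{\alpha}\mathbb{E}\big[Z\,(\log(\alpha/(\lambda Z)))^+\big]$ for $\lambda\in(0,\infty)$. Then $g$ is well-defined and finite (indeed $g(\lambda)\le 1/\lambda$), continuous, nonincreasing, satisfies $\lim_{\lambda\to\infty}g(\lambda)=0$ and $\lim_{\lambda\downarrow 0}g(\lambda)=+\infty$, and is strictly decreasing at every $\lambda$ with $g(\lambda)>0$. Consequently, for every $v>0$ there is a unique $\lambda>0$ with $g(\lambda)=v$. -/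
/-!
Pointwise, `λ ↦ z (log (α/(λz)))⁺` is nonnegative, continuous and nonincreasing, and
`log q ≤ q - 1` bounds it by `α/λ`; dominated convergence and monotonicity of the integral pass
these properties to `g`, and the bound gives `g λ ≤ 1/λ → 0`. Since `Z > 0` a.s., some band
`{c ≤ Z ≤ 1/c}` has positive mass, and on it the integrand is at least `c log (αc/λ) → ∞` as
`λ ↓ 0`. Where the integrand is positive it is strictly decreasing in `λ`, so `g` is strictly
decreasing wherever it is positive; existence and uniqueness of `g λ = v` then follow from the
intermediate value theorem.
-/

open MeasureTheory ProbabilityTheory Filter Set Real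

noncomputable def budgetIntegrand (α lam z : ℝ) : ℝ := z * max (log (α / (lam * z))) 0

section Pointwise

variable {α lam lam' z : ℝ}

lemma budgetIntegrand_nonneg (hz : 0 ≤ z) : 0 ≤ budgetIntegrand α lam z :=
  mul_nonneg hz (le_max_right _ _)

lemma budgetIntegrand_le (hα : 0 < α) (hlam : 0 < lam) (hz : 0 < z) :
    budgetIntegrand α lam z ≤ α / lam := by
  rcases le_or_gt (log (α / (lam * z))) 0 with h | h
  · rw [budgetIntegrand, max_eq_right h, mul_zero]
    positivity
  · calc budgetIntegrand α lam z = z * log (α / (lam * z)) := by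
          rw [budgetIntegrand, max_eq_left h.le]
      _ ≤ z * (α / (lam * z) - 1) :=
          mul_le_mul_of_nonneg_left (log_le_sub_one_of_pos (by positivity)) hz.le
      _ = α / lam - z := by field_simp
      _ ≤ α / lam := by linarith

lemma budgetIntegrand_antitoneOn (hα : 0 < α) (hz : 0 < z) :
    AntitoneOn (fun lam => budgetIntegrand α lam z) (Ioi 0) := by
  intro lam' (hlam' : 0 < lam') lam (hlam : 0 < lam) hle
  refine mul_le_mul_of_nonneg_left (max_le_max (log_le_log (by positivity) ?_) le_rfl) hz.le
  exact div_le_div_of_nonneg_left hα.le (mul_pos hlam' hz) (by gcongr)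

lemma budgetIntegrand_lt_of_pos (hα : 0 < α) (hlam' : 0 < lam') (hlt : lam' < lam) (hz : 0 < z)
    (hpos : 0 < budgetIntegrand α lam z) : budgetIntegrand α lam z < budgetIntegrand α lam' z := by
  have hlog : 0 < log (α / (lam * z)) := by
    by_contra! h
    rw [budgetIntegrand, max_eq_right h, mul_zero] at hpos
    exact hpos.false
  have hlam : 0 < lam := hlam'.trans hlt
  have hmono : log (α / (lam * z)) < log (α / (lam' * z)) :=
    log_lt_log (by positivity) (div_lt_div_of_pos_left hα (by positivity) (by gcongr))
  rw [budgetIntegrand, budgetIntegrand, max_eq_left hlog.le, max_eq_left (hlog.trans hmono).le]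
  exact mul_lt_mul_of_pos_left hmono hz

lemma continuousAt_budgetIntegrand (hα : α ≠ 0) (hz : 0 < z) (hlam : 0 < lam) :
    ContinuousAt (fun lam => budgetIntegrand α lam z) lam := by
  have hq : ContinuousAt (fun lam => α / (lam * z)) lam :=
    continuousAt_const.div (continuousAt_id.mul continuousAt_const) (by positivity)
  exact continuousAt_const.mul (((continuousAt_log (by simp [hα, hlam.ne', hz.ne'])).comp hq).max
    continuousAt_const)

lemma mul_log_le_budgetIntegrand {c : ℝ} (hα : 0 < α) (hlam : 0 < lam) (hc : 0 < c)
    (hcz : c ≤ z) (hzc : z ≤ c⁻¹) : c * log (α * c / lam) ≤ budgetIntegrand α lam z := by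
  have hz : 0 < z := hc.trans_le hcz
  rcases le_or_gt (log (α * c / lam)) 0 with h | h
  · exact (mul_nonpos_of_nonneg_of_nonpos hc.le h).trans (budgetIntegrand_nonneg hz.le)
  have hq : α * c / lam ≤ α / (lam * z) := by
    rw [div_le_div_iff₀ hlam (by positivity)]
    have : z * c ≤ 1 := by simpa [hc.ne'] using mul_le_mul_of_nonneg_right hzc hc.le
    nlinarith [mul_pos hα hlam]
  calc c * log (α * c / lam) ≤ z * log (α * c / lam) := mul_le_mul_of_nonneg_right hcz h.le
    _ ≤ budgetIntegrand α lam z :=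
        mul_le_mul_of_nonneg_left ((log_le_log (by positivity) hq).trans (le_max_left _ _)) hz.le

end Pointwise

lemma exists_measure_preimage_Icc_inv_pos {Ω : Type*} {m0 : MeasurableSpace Ω} {μ : Measure Ω}
    [NeZero μ] {Z : Ω → ℝ} (hZpos : ∀ᵐ ω ∂μ, 0 < Z ω) :
    ∃ c : ℝ, 0 < c ∧ 0 < μ (Z ⁻¹' Icc c c⁻¹) := by
  have hcover : {ω | 0 < Z ω} ⊆ ⋃ n : ℕ, Z ⁻¹' Icc ((n : ℝ) + 1)⁻¹ ((n : ℝ) + 1)⁻¹⁻¹ := by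
    intro ω (hω : 0 < Z ω)
    obtain ⟨n, hn⟩ := exists_nat_ge (max (Z ω)⁻¹ (Z ω))
    refine mem_iUnion.mpr ⟨n, inv_le_of_inv_le₀ hω ?_, ?_⟩
    · linarith [le_max_left (Z ω)⁻¹ (Z ω)]
    · rw [inv_inv]
      linarith [le_max_right (Z ω)⁻¹ (Z ω)]
  have hfull : μ {ω | 0 < Z ω} ≠ 0 := by
    rw [measure_congr (eventuallyEq_univ.mpr hZpos)]
    exact NeZero.ne _
  obtain ⟨n, hn⟩ := exists_measure_pos_of_not_measure_iUnion_null
    fun h => hfull (measure_mono_null hcover h)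
  exact ⟨_, by positivity, hn⟩

noncomputable def dualBudget {Ω : Type*} {m0 : MeasurableSpace Ω} (μ : Measure Ω) (Z : Ω → ℝ)
    (α lam : ℝ) : ℝ :=
  (1 / α) * ∫ ω, budgetIntegrand α lam (Z ω) ∂μ

section DualBudget

variable {Ω : Type*} {m0 : MeasurableSpace Ω} {μ : Measure Ω} {Z : Ω → ℝ} {α lam lam' : ℝ}

lemma measurable_budgetIntegrand (hZ : Measurable Z) (α lam : ℝ) :
    Measurable fun ω => budgetIntegrand α lam (Z ω) :=
  hZ.mul ((measurable_log.comp (measurable_const.div (measurable_const.mul hZ))).max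
    measurable_const)

lemma integrable_budgetIntegrand [IsFiniteMeasure μ] (hZ : Measurable Z)
    (hZpos : ∀ᵐ ω ∂μ, 0 < Z ω) (hα : 0 < α) (hlam : 0 < lam) :
    Integrable (fun ω => budgetIntegrand α lam (Z ω)) μ := by
  refine (integrable_const (α / lam)).mono'
    (measurable_budgetIntegrand hZ α lam).aestronglyMeasurable ?_
  filter_upwards [hZpos] with ω hω
  rw [norm_of_nonneg (budgetIntegrand_nonneg hω.le)]
  exact budgetIntegrand_le hα hlam hω

lemma dualBudget_nonneg (hZpos : ∀ᵐ ω ∂μ, 0 < Z ω) (hα : 0 < α) : 0 ≤ dualBudget μ Z α lam :=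
  mul_nonneg (by positivity) (integral_nonneg_of_ae (by
    filter_upwards [hZpos] with ω hω using budgetIntegrand_nonneg hω.le))

lemma dualBudget_le_one_div [IsProbabilityMeasure μ] (hZ : Measurable Z)
    (hZpos : ∀ᵐ ω ∂μ, 0 < Z ω) (hα : 0 < α) (hlam : 0 < lam) : dualBudget μ Z α lam ≤ 1 / lam := by
  have hint : ∫ ω, budgetIntegrand α lam (Z ω) ∂μ ≤ α / lam := by
    calc ∫ ω, budgetIntegrand α lam (Z ω) ∂μ ≤ ∫ _, α / lam ∂μ :=
          integral_mono_ae (integrable_budgetIntegrand hZ hZpos hα hlam) (integrable_const _)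
            (by filter_upwards [hZpos] with ω hω using budgetIntegrand_le hα hlam hω)
      _ = α / lam := by simp
  calc dualBudget μ Z α lam ≤ (1 / α) * (α / lam) :=
        mul_le_mul_of_nonneg_left hint (by positivity)
    _ = 1 / lam := by field_simp

lemma antitoneOn_dualBudget [IsFiniteMeasure μ] (hZ : Measurable Z)
    (hZpos : ∀ᵐ ω ∂μ, 0 < Z ω) (hα : 0 < α) : AntitoneOn (dualBudget μ Z α) (Ioi 0) := by
  intro lam' hlam' lam hlam hle
  refine mul_le_mul_of_nonneg_left ?_ (by positivity)
  refine integral_mono_ae (integrable_budgetIntegrand hZ hZpos hα hlam)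
    (integrable_budgetIntegrand hZ hZpos hα hlam') ?_
  filter_upwards [hZpos] with ω hω using budgetIntegrand_antitoneOn hα hω hlam' hlam hle

lemma continuousOn_dualBudget [IsFiniteMeasure μ] (hZ : Measurable Z)
    (hZpos : ∀ᵐ ω ∂μ, 0 < Z ω) (hα : 0 < α) : ContinuousOn (dualBudget μ Z α) (Ioi 0) := by
  intro x (hx : 0 < x)
  refine (continuousAt_const.mul ?_).continuousWithinAt
  -- on the neighbourhood `λ > x/2` the integrand is dominated by `α / (x/2)`
  refine continuousAt_of_dominated (bound := fun _ => α / (x / 2))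
    (Eventually.of_forall fun l => (measurable_budgetIntegrand hZ α l).aestronglyMeasurable)
    ?_ (integrable_const _) ?_
  · filter_upwards [eventually_gt_nhds (half_lt_self hx)] with l hl
    filter_upwards [hZpos] with ω hω
    rw [norm_of_nonneg (budgetIntegrand_nonneg hω.le)]
    exact (budgetIntegrand_le hα (by linarith) hω).trans
      (div_le_div_of_nonneg_left hα.le (by linarith) hl.le)
  · filter_upwards [hZpos] with ω hω using continuousAt_budgetIntegrand hα.ne' hω hx

lemma tendsto_dualBudget_atTop [IsProbabilityMeasure μ] (hZ : Measurable Z)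
    (hZpos : ∀ᵐ ω ∂μ, 0 < Z ω) (hα : 0 < α) : Tendsto (dualBudget μ Z α) atTop (nhds 0) := by
  refine tendsto_of_tendsto_of_tendsto_of_le_of_le' tendsto_const_nhds tendsto_inv_atTop_zero
    (Eventually.of_forall fun _ => dualBudget_nonneg hZpos hα) ?_
  filter_upwards [eventually_gt_atTop 0] with l hl
  simpa [one_div] using dualBudget_le_one_div hZ hZpos hα hl

lemma mul_log_le_dualBudget [IsFiniteMeasure μ] (hZ : Measurable Z) (hZpos : ∀ᵐ ω ∂μ, 0 < Z ω)
    (hα : 0 < α) (hlam : 0 < lam) {c : ℝ} (hc : 0 < c) :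
    (1 / α) * (μ.real (Z ⁻¹' Icc c c⁻¹) * c) * log (α * c / lam) ≤ dualBudget μ Z α lam := by
  set s := Z ⁻¹' Icc c c⁻¹
  have hs : MeasurableSet s := hZ measurableSet_Icc
  have hband : ∫ ω, s.indicator (fun _ => c * log (α * c / lam)) ω ∂μ
      ≤ ∫ ω, budgetIntegrand α lam (Z ω) ∂μ := by
    refine integral_mono_ae ((integrable_const _).indicator hs)
      (integrable_budgetIntegrand hZ hZpos hα hlam) ?_
    filter_upwards [hZpos] with ω hω
    by_cases hωs : ω ∈ s
    · rw [indicator_of_mem hωs]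
      exact mul_log_le_budgetIntegrand hα hlam hc hωs.1 hωs.2
    · rw [indicator_of_notMem hωs]
      exact budgetIntegrand_nonneg hω.le
  rw [integral_indicator_const _ hs, smul_eq_mul] at hband
  calc (1 / α) * (μ.real s * c) * log (α * c / lam)
      = (1 / α) * (μ.real s * (c * log (α * c / lam))) := by ring
    _ ≤ dualBudget μ Z α lam := mul_le_mul_of_nonneg_left hband (by positivity)

lemma tendsto_dualBudget_nhdsGT_zero [IsProbabilityMeasure μ] (hZ : Measurable Z)
    (hZpos : ∀ᵐ ω ∂μ, 0 < Z ω) (hα : 0 < α) :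
    Tendsto (dualBudget μ Z α) (nhdsWithin 0 (Ioi 0)) atTop := by
  obtain ⟨c, hc, hmass⟩ := exists_measure_preimage_Icc_inv_pos hZpos
  have hmass' : 0 < μ.real (Z ⁻¹' Icc c c⁻¹) := ENNReal.toReal_pos hmass.ne' (measure_ne_top _ _)
  have hlog : Tendsto (fun lam => log (α * c / lam)) (nhdsWithin 0 (Ioi 0)) atTop := by
    refine (tendsto_atTop_add_const_left _ (log (α * c))
      (tendsto_neg_atBot_atTop.comp tendsto_log_nhdsGT_zero)).congr' ?_
    filter_upwards [self_mem_nhdsWithin] with lam (hlam : 0 < lam)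
    rw [log_div (by positivity) hlam.ne', sub_eq_add_neg]
    rfl
  refine tendsto_atTop_mono' _ ?_
    (hlog.const_mul_atTop (show 0 < (1 / α) * (μ.real (Z ⁻¹' Icc c c⁻¹) * c) by positivity))
  filter_upwards [self_mem_nhdsWithin] with lam hlam
  exact mul_log_le_dualBudget hZ hZpos hα hlam hc

lemma dualBudget_lt_of_pos [IsFiniteMeasure μ] (hZ : Measurable Z) (hZpos : ∀ᵐ ω ∂μ, 0 < Z ω)
    (hα : 0 < α) (hlam' : 0 < lam') (hlt : lam' < lam) (hpos : 0 < dualBudget μ Z α lam) :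
    dualBudget μ Z α lam < dualBudget μ Z α lam' := by
  set H : ℝ → Ω → ℝ := fun l ω => budgetIntegrand α l (Z ω)
  have hint : ∀ l, 0 < l → Integrable (H l) μ :=
    fun l hl => integrable_budgetIntegrand hZ hZpos hα hl
  have hlam : 0 < lam := hlam'.trans hlt
  suffices h : ∫ ω, H lam ω ∂μ < ∫ ω, H lam' ω ∂μ from mul_lt_mul_of_pos_left h (by positivity)
  by_contra! hle
  have hgap : H lam' - H lam =ᵐ[μ] 0 := by
    have hnonneg : 0 ≤ᵐ[μ] H lam' - H lam := by
      filter_upwards [hZpos] with ω hω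
      exact sub_nonneg.mpr (budgetIntegrand_antitoneOn hα hω hlam' hlam hlt.le)
    refine (integral_eq_zero_iff_of_nonneg_ae hnonneg ((hint lam' hlam').sub (hint lam hlam))).mp ?_
    refine le_antisymm ?_ (integral_nonneg_of_ae hnonneg)
    rw [integral_sub' (hint lam' hlam') (hint lam hlam)]
    exact sub_nonpos.mpr hle
  have hzero : H lam =ᵐ[μ] 0 := by
    filter_upwards [hZpos, hgap] with ω hω hgapω
    by_contra hne
    have := budgetIntegrand_lt_of_pos hα hlam' hlt hω
      ((budgetIntegrand_nonneg hω.le).lt_of_ne (Ne.symm hne))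
    simp only [Pi.sub_apply, Pi.zero_apply, H] at hgapω this
    linarith
  have hI : ∫ ω, H lam ω ∂μ = 0 := by simpa using integral_congr_ae hzero
  rw [dualBudget, hI, mul_zero] at hpos
  exact hpos.false

end DualBudget

lemma existsUnique_eq_of_tendsto_of_lt_of_pos {g : ℝ → ℝ} (hcont : ContinuousOn g (Ioi 0))
    (htop : Tendsto g atTop (nhds 0)) (hbot : Tendsto g (nhdsWithin 0 (Ioi 0)) atTop)
    (hstrict : ∀ lam lam', 0 < lam' → lam' < lam → 0 < g lam → g lam < g lam')
    {v : ℝ} (hv : 0 < v) : ∃! lam, 0 < lam ∧ g lam = v := by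
  obtain ⟨a, hga, ha⟩ := ((hbot.eventually_ge_atTop v).and self_mem_nhdsWithin).exists
  obtain ⟨b, hgb, hab⟩ :=
    ((htop.eventually_lt_const hv).and (eventually_ge_atTop a)).exists
  obtain ⟨lam, hlam, hglam⟩ := intermediate_value_Icc' hab
    (hcont.mono fun x hx => lt_of_lt_of_le ha hx.1) ⟨hgb.le, hga⟩
  have hlam0 : 0 < lam := lt_of_lt_of_le ha hlam.1
  refine ⟨lam, ⟨hlam0, hglam⟩, fun y ⟨hy, hgy⟩ => ?_⟩
  by_contra hne
  rcases lt_or_gt_of_ne hne with h | h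
  · exact (hstrict lam y hy h (hglam ▸ hv)).ne (hglam.trans hgy.symm)
  · exact (hstrict y lam hlam0 h (hgy ▸ hv)).ne (hgy.trans hglam.symm)

theorem value_info_stmt5_general
    {Ω : Type*} {m0 : MeasurableSpace Ω} (μ : Measure Ω) [IsProbabilityMeasure μ]
    (Z : Ω → ℝ) (hZmeas : Measurable Z) (hZpos : ∀ᵐ ω ∂μ, 0 < Z ω)
    (α : ℝ) (hα : 0 < α)
    (g : ℝ → ℝ)
    (hg : ∀ lam, g lam = (1 / α) * ∫ ω, Z ω * max (Real.log (α / (lam * Z ω))) 0 ∂μ) :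
    (∀ lam, 0 < lam → Integrable (fun ω => Z ω * max (Real.log (α / (lam * Z ω))) 0) μ)
    ∧ (∀ lam, 0 < lam → g lam ≤ 1 / lam)
    ∧ ContinuousOn g (Set.Ioi 0)
    ∧ AntitoneOn g (Set.Ioi 0)
    ∧ Tendsto g atTop (nhds 0)
    ∧ Tendsto g (nhdsWithin 0 (Set.Ioi 0)) atTop
    ∧ (∀ lam lam' : ℝ, 0 < lam' → lam' < lam → 0 < g lam → g lam < g lam')
    ∧ (∀ v : ℝ, 0 < v → ∃! lam : ℝ, 0 < lam ∧ g lam = v) := by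
  obtain rfl : g = dualBudget μ Z α := funext hg
  have hcont := continuousOn_dualBudget hZmeas hZpos hα
  have htop := tendsto_dualBudget_atTop hZmeas hZpos hα
  have hbot := tendsto_dualBudget_nhdsGT_zero hZmeas hZpos hα
  have hstrict : ∀ lam lam' : ℝ, 0 < lam' → lam' < lam → 0 < dualBudget μ Z α lam →
      dualBudget μ Z α lam < dualBudget μ Z α lam' :=
    fun _ _ hlam' hlt hpos => dualBudget_lt_of_pos hZmeas hZpos hα hlam' hlt hpos
  exact ⟨fun _ hlam => integrable_budgetIntegrand hZmeas hZpos hα hlam,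
    fun _ hlam => dualBudget_le_one_div hZmeas hZpos hα hlam, hcont,
    antitoneOn_dualBudget hZmeas hZpos hα, htop, hbot, hstrict,
    fun _ hv => existsUnique_eq_of_tendsto_of_lt_of_pos hcont htop hbot hstrict hv⟩

/-- Properties of the dual budget function of exponential-utility
maximization: `g(λ) = (1/α) E[Z (log(α/(λZ)))⁺]` is finite (bounded by `1/λ`),
continuous and nonincreasing on `(0,∞)`, tends to `0` at `∞` and to `∞` at `0⁺`,
is strictly decreasing wherever positive, and takes every value `v > 0` exactly once. -/
theorem value_info_stmt5
    {Ω : Type*} {m0 : MeasurableSpace Ω} (μ : Measure Ω) [IsProbabilityMeasure μ]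
    (Z : Ω → ℝ) (hZmeas : Measurable Z) (hZpos : ∀ᵐ ω ∂μ, 0 < Z ω)
    (hZint : Integrable Z μ)
    (α : ℝ) (hα : 0 < α)
    (g : ℝ → ℝ)
    (hg : ∀ lam, g lam = (1 / α) * ∫ ω, Z ω * max (Real.log (α / (lam * Z ω))) 0 ∂μ) :
    (∀ lam, 0 < lam → Integrable (fun ω => Z ω * max (Real.log (α / (lam * Z ω))) 0) μ)
    ∧ (∀ lam, 0 < lam → g lam ≤ 1 / lam)
    ∧ ContinuousOn g (Set.Ioi 0)
    ∧ AntitoneOn g (Set.Ioi 0)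
    ∧ Tendsto g atTop (nhds 0)
    ∧ Tendsto g (nhdsWithin 0 (Set.Ioi 0)) atTop
    ∧ (∀ lam lam' : ℝ, 0 < lam' → lam' < lam → 0 < g lam → g lam < g lam')
    ∧ (∀ v : ℝ, 0 < v → ∃! lam : ℝ, 0 < lam ∧ g lam = v) :=
  value_info_stmt5_general (m0 := m0) μ Z hZmeas hZpos α hα g hg
end

section
/- Let $r\in(0,1)$. The function $p \mapsto \big((1-r)^{1-p} + r^{1-p}\big)^{-1/p}$ is (weakly) decreasing on $(0,1)$; equivalently, the power-utility indifference value $\pi^{\mathrm{pwr}}(v) = v\big(1-((1-r)^{1-p}+r^{1-p})^{-1/p}\big)$ is nondecreasing in $p\in(0,1)$ for every $v>0$. -/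
/-!
With weights `(1 - r, r)`, `(1 - r) ^ (1 - p) + r ^ (1 - p) = (1 - r) (1 - r)⁻¹ ^ p + r r⁻¹ ^ p`,
so `((1 - r) ^ (1 - p) + r ^ (1 - p)) ^ (1 / p)` is the weighted power mean of order `p` of
`(1 - r)⁻¹` and `r⁻¹`. Power means increase with their order (Jensen's inequality for
`x ↦ x ^ (q / p)`), and the function in question is the reciprocal of this mean.
-/

open Real

open Finset in
theorem rpow_mean_le_rpow_mean {ι : Type*} (s : Finset ι) (w z : ι → ℝ)
    (hw : ∀ i ∈ s, 0 ≤ w i) (hw' : ∑ i ∈ s, w i = 1) (hz : ∀ i ∈ s, 0 ≤ z i) {p q : ℝ}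
    (hp : 0 < p) (hpq : p ≤ q) :
    (∑ i ∈ s, w i * z i ^ p) ^ (1 / p) ≤ (∑ i ∈ s, w i * z i ^ q) ^ (1 / q) := by
  have hmean := arith_mean_le_rpow_mean s w (fun i ↦ z i ^ p) hw hw'
    (fun i hi ↦ rpow_nonneg (hz i hi) p) ((one_le_div hp).2 hpq)
  have hpow : ∀ i ∈ s, w i * (z i ^ p) ^ (q / p) = w i * z i ^ q := fun i hi ↦ by
    rw [← rpow_mul (hz i hi), mul_div_cancel₀ q hp.ne']
  rw [sum_congr rfl hpow] at hmean
  have hsum : 0 ≤ ∑ i ∈ s, w i * z i ^ q :=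
    sum_nonneg fun i hi ↦ mul_nonneg (hw i hi) (rpow_nonneg (hz i hi) q)
  calc (∑ i ∈ s, w i * z i ^ p) ^ (1 / p)
      ≤ ((∑ i ∈ s, w i * z i ^ q) ^ (1 / (q / p))) ^ (1 / p) :=
        rpow_le_rpow (sum_nonneg fun i hi ↦ mul_nonneg (hw i hi) (rpow_nonneg (hz i hi) p))
          hmean (by positivity)
    _ = (∑ i ∈ s, w i * z i ^ q) ^ (1 / q) := by
        rw [← rpow_mul hsum]
        congr 1
        field_simp

theorem rpow_one_sub_eq_mul_inv_rpow {a : ℝ} (ha : 0 < a) (p : ℝ) :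
    a ^ (1 - p) = a * a⁻¹ ^ p := by
  rw [rpow_sub ha, rpow_one, inv_rpow ha.le, div_eq_mul_inv]

theorem monotoneOn_rpow_mean_two {a b : ℝ} (ha : 0 < a) (hb : 0 < b) (hab : a + b = 1) :
    MonotoneOn (fun p : ℝ ↦ (a ^ (1 - p) + b ^ (1 - p)) ^ (1 / p)) (Set.Ioi 0) := by
  intro p hp q _ hpq
  have := rpow_mean_le_rpow_mean Finset.univ ![a, b] ![a⁻¹, b⁻¹]
    (by simp [Fin.forall_fin_two, ha.le, hb.le]) (by simp [hab])
    (by simp [Fin.forall_fin_two, ha.le, hb.le]) hp hpq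
  simpa [rpow_one_sub_eq_mul_inv_rpow ha, rpow_one_sub_eq_mul_inv_rpow hb] using this

/-- For `r ∈ (0,1)`, the map `p ↦ ((1-r)^{1-p} + r^{1-p})^{-1/p}` is
(weakly) decreasing on `(0,1)`; equivalently, the power-utility indifference value
`π(v) = v (1 - ((1-r)^{1-p}+r^{1-p})^{-1/p})` is nondecreasing in `p ∈ (0,1)` for
every `v > 0`. -/
theorem value_info_stmt10 (r : ℝ) (hr : r ∈ Set.Ioo (0 : ℝ) 1) :
    AntitoneOn (fun p : ℝ => ((1 - r) ^ (1 - p) + r ^ (1 - p)) ^ (-1 / p))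
      (Set.Ioo (0 : ℝ) 1)
    ∧ ∀ v : ℝ, 0 < v →
      MonotoneOn (fun p : ℝ => v * (1 - ((1 - r) ^ (1 - p) + r ^ (1 - p)) ^ (-1 / p)))
        (Set.Ioo (0 : ℝ) 1) := by
  obtain ⟨hr0, hr1⟩ := hr
  have hS : ∀ p : ℝ, 0 < (1 - r) ^ (1 - p) + r ^ (1 - p) := fun p ↦ by
    have : 0 < 1 - r := by linarith
    positivity
  have hinv : ∀ p : ℝ, ((1 - r) ^ (1 - p) + r ^ (1 - p)) ^ (-1 / p)
      = (((1 - r) ^ (1 - p) + r ^ (1 - p)) ^ (1 / p))⁻¹ := fun p ↦ by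
    rw [← rpow_neg (hS p).le, neg_div]
  have hanti : AntitoneOn (fun p : ℝ => ((1 - r) ^ (1 - p) + r ^ (1 - p)) ^ (-1 / p))
      (Set.Ioo (0 : ℝ) 1) := by
    intro p hp q hq hpq
    simp only [hinv]
    exact inv_anti₀ (rpow_pos_of_pos (hS p) _)
      (monotoneOn_rpow_mean_two (by linarith) hr0 (by ring) hp.1 hq.1 hpq)
  refine ⟨hanti, fun v hv p hp q hq hpq ↦ ?_⟩
  have := hanti hp hq hpq
  dsimp only at this ⊢
  gcongr
end

section
/- Let $(\mathcal{F}_t)_{t\in[0,T]}$ be a filtration, $L$ a discrete random variable with finite range $E$ and $\mathbb{P}(L=x)>0$ for all $x\in E$, and suppose $\mathbb{P}(q^x_T>0)=1$ for every $x\in E$, where $q^x_t := \mathbb{P}(L=x|\mathcal{F}_t)/\mathbb{P}(L=x)$. Let $(N_t)$ be a bounded martingale with respect to $(\mathcal{F}_t)$. Then the process $(N_t/q^L_t)$ is a martingale with respect to the initially enlarged filtration $\mathcal{G}_t := \mathcal{F}_t\vee\sigma(L)$; in particular $\mathbb{E}[N_t\,h(L)\mathbf{1}_A/q^L_t] = \mathbb{E}[N_s\,h(L)\mathbf{1}_A/q^L_s]$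 for all $s\le t$, $A\in\mathcal{F}_s$, and bounded $h:E\to\mathbb{R}$. -/
open MeasureTheory

/-! Write `p^x_t = P(L = x | 𝓕_t)`, so that `1/q^x_t = P(L = x)/p^x_t`. The measures `1_{L=x} · μ`
and `p^x_t · μ` agree on `𝓕_t`, hence `∫_{L=x} g/p^x_t = ∫ p^x_t · g/p^x_t = ∫ g` for every
integrable `𝓕_t`-measurable `g`, although `g/p^x_t` need not be integrable. Summing over the atoms,
`E[G(L)/q^L_t] = Σ_x P(L = x) E[G(x)]` whenever each `G(x)` is `𝓕_t`-measurable and integrable,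
and the martingale property of `N` passes through each term. Every set of `𝓕_s ∨ σ(L)` has the
form `{ω | ω ∈ A_{L ω}}` with `A_x ∈ 𝓕_s`, so this covers all test sets of the conditional
expectation. Positivity of `p^x_t` for `t ≤ T` follows from that at `T`, as
`p^x_t = E[p^x_T | 𝓕_t]`. -/

section CondExp

variable {Ω : Type*} {m m0 : MeasurableSpace Ω} {μ : Measure Ω} {S : Set Ω}

lemma condExp_indicator_one_nonneg : 0 ≤ᵐ[μ] μ[S.indicator (fun _ => (1 : ℝ))|m] :=
  condExp_nonneg <| Filter.Eventually.of_forall fun _ =>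
    Set.indicator_nonneg (fun _ _ => zero_le_one) _

variable [IsFiniteMeasure μ]

lemma trim_withDensity_ofReal_condExp (hm : m ≤ m0) {Y : Ω → ℝ} (hY : Integrable Y μ)
    (hY0 : 0 ≤ᵐ[μ] Y) :
    (μ.withDensity fun ω => ENNReal.ofReal (μ[Y|m] ω)).trim hm
      = (μ.withDensity fun ω => ENNReal.ofReal (Y ω)).trim hm := by
  refine @Measure.ext _ m _ _ fun S hS => ?_
  rw [trim_measurableSet_eq hm hS, trim_measurableSet_eq hm hS, withDensity_apply _ (hm S hS),
    withDensity_apply _ (hm S hS),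
    ← ofReal_integral_eq_lintegral_ofReal integrable_condExp.integrableOn
      (ae_restrict_of_ae (condExp_nonneg hY0)),
    ← ofReal_integral_eq_lintegral_ofReal hY.integrableOn (ae_restrict_of_ae hY0),
    setIntegral_condExp hm hY hS]

lemma ae_pos_condExp (hm : m ≤ m0) {Y : Ω → ℝ} (hY : Integrable Y μ)
    (hY0 : ∀ᵐ ω ∂μ, 0 < Y ω) : ∀ᵐ ω ∂μ, 0 < μ[Y|m] ω := by
  set B := {ω | μ[Y|m] ω ≤ 0}
  have hB : MeasurableSet[m] B :=
    measurableSet_le stronglyMeasurable_condExp.measurable measurable_const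
  have hBY : ∫⁻ ω in B, ENNReal.ofReal (Y ω) ∂μ = 0 := by
    have := congrArg (· B) (trim_withDensity_ofReal_condExp hm hY (hY0.mono fun _ h => h.le))
    simp only [trim_measurableSet_eq hm hB, withDensity_apply _ (hm B hB)] at this
    rw [← this]
    exact setLIntegral_eq_zero (hm B hB) fun ω hω => ENNReal.ofReal_eq_zero.2 hω
  have hYB := (setLIntegral_eq_zero_iff' (hm B hB) hY.1.aemeasurable.ennreal_ofReal.restrict).1 hBY
  filter_upwards [hYB, hY0] with ω hYω hpos
  by_contra hω
  exact hpos.not_ge (ENNReal.ofReal_eq_zero.1 (hYω (not_lt.1 hω)))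

lemma ae_pos_condExp_of_le {m₁ m₂ : MeasurableSpace Ω} (h₁₂ : m₁ ≤ m₂) (h₂ : m₂ ≤ m0) {f : Ω → ℝ}
    (hf : ∀ᵐ ω ∂μ, 0 < μ[f|m₂] ω) :
    ∀ᵐ ω ∂μ, 0 < μ[f|m₁] ω := by
  filter_upwards [condExp_condExp_of_le h₁₂ h₂ (f := f),
    ae_pos_condExp (h₁₂.trans h₂) integrable_condExp hf] with ω htower hpos
  rwa [← htower]

lemma trim_restrict_eq_trim_withDensity_condExp_indicator (hm : m ≤ m0)
    (hS : MeasurableSet S) :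
    (μ.restrict S).trim hm
      = (μ.withDensity fun ω => ENNReal.ofReal (μ[S.indicator (fun _ => (1 : ℝ))|m] ω)).trim
          hm := by
  rw [trim_withDensity_ofReal_condExp hm ((integrable_const 1).indicator hS)
    (Filter.Eventually.of_forall fun _ => Set.indicator_nonneg (fun _ _ => zero_le_one) _)]
  congr
  rw [← withDensity_indicator_one hS]
  congr 1
  ext ω
  by_cases h : ω ∈ S <;> simp [h]

variable {F : Ω → ℝ}

lemma integrableOn_iff_integrable_condExp_indicator_mul (hm : m ≤ m0) (hS : MeasurableSet S)
    (hF : StronglyMeasurable[m] F) :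
    IntegrableOn F S μ
      ↔ Integrable (fun ω => μ[S.indicator (fun _ => (1 : ℝ))|m] ω * F ω) μ := by
  have hp : Measurable fun ω => ENNReal.ofReal (μ[S.indicator (fun _ => (1 : ℝ))|m] ω) :=
    (stronglyMeasurable_condExp.mono hm).measurable.ennreal_ofReal
  have trim_iff (ν : Measure Ω) : Integrable F (ν.trim hm) ↔ Integrable F ν :=
    ⟨integrable_of_integrable_trim hm, fun h => h.trim hm hF⟩
  rw [IntegrableOn, ← trim_iff, trim_restrict_eq_trim_withDensity_condExp_indicator hm hS,
    trim_iff, integrable_withDensity_iff_integrable_smul' hp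
      (Filter.Eventually.of_forall fun _ => ENNReal.ofReal_lt_top)]
  refine integrable_congr ?_
  filter_upwards [condExp_indicator_one_nonneg (μ := μ) (m := m) (S := S)] with ω hω
  simp [ENNReal.toReal_ofReal hω]

lemma setIntegral_eq_integral_condExp_indicator_mul (hm : m ≤ m0) (hS : MeasurableSet S)
    (hF : StronglyMeasurable[m] F) :
    ∫ ω in S, F ω ∂μ = ∫ ω, μ[S.indicator (fun _ => (1 : ℝ))|m] ω * F ω ∂μ := by
  have hp : Measurable fun ω => ENNReal.ofReal (μ[S.indicator (fun _ => (1 : ℝ))|m] ω) :=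
    (stronglyMeasurable_condExp.mono hm).measurable.ennreal_ofReal
  rw [integral_trim hm hF, trim_restrict_eq_trim_withDensity_condExp_indicator hm hS,
    ← integral_trim hm hF, integral_withDensity_eq_integral_toReal_smul hp
      (Filter.Eventually.of_forall fun _ => ENNReal.ofReal_lt_top)]
  refine integral_congr_ae ?_
  filter_upwards [condExp_indicator_one_nonneg (μ := μ) (m := m) (S := S)] with ω hω
  simp [ENNReal.toReal_ofReal hω]

end CondExp

section Enlargement

variable {Ω E : Type*} {m m0 : MeasurableSpace Ω}

lemma sum_indicator_preimage_singleton [Fintype E] (L : Ω → E) (F : E → Ω → ℝ) (ω : Ω) :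
    ∑ x, {ω' | L ω' = x}.indicator (F x) ω = F (L ω) ω := by
  classical
  simp [Set.indicator_apply]

lemma exists_eq_setOf_mem_of_measurableSet_sup_comap (L : Ω → E) {B : Set Ω}
    (hB : MeasurableSet[m ⊔ MeasurableSpace.comap L ⊤] B) :
    ∃ A : E → Set Ω, (∀ x, MeasurableSet[m] (A x)) ∧ B = {ω | ω ∈ A (L ω)} := by
  obtain hgen := MeasurableSpace.measurableSet_sup.1 hB
  clear hB
  induction hgen with
  | basic S hS =>
    rcases hS with hS | ⟨C, -, rfl⟩
    · exact ⟨fun _ => S, fun _ => hS, rfl⟩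
    · classical
      exact ⟨fun x => if x ∈ C then Set.univ else ∅, fun x => by dsimp only; split_ifs <;> simp,
        by ext ω; by_cases h : L ω ∈ C <;> simp [h]⟩
  | empty => exact ⟨fun _ => ∅, fun _ => MeasurableSet.empty, rfl⟩
  | compl S _ ih =>
    obtain ⟨A, hA, rfl⟩ := ih
    exact ⟨fun x => (A x)ᶜ, fun x => (hA x).compl, rfl⟩
  | iUnion S _ ih =>
    choose A hA hSA using ih
    refine ⟨fun x => ⋃ n, A n x, fun x => MeasurableSet.iUnion fun n => hA n x, ?_⟩
    ext ω
    simp [hSA]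

lemma stronglyMeasurable_sup_comap_eval [Fintype E] {L : Ω → E} {F : E → Ω → ℝ}
    (hF : ∀ x, StronglyMeasurable[m] (F x)) :
    StronglyMeasurable[m ⊔ MeasurableSpace.comap L ⊤] fun ω => F (L ω) ω := by
  simp_rw [← sum_indicator_preimage_singleton L F]
  refine Finset.stronglyMeasurable_fun_sum _ fun x _ =>
    ((hF x).mono (le_sup_left : m ≤ m ⊔ MeasurableSpace.comap L ⊤)).indicator ?_
  exact (le_sup_right : MeasurableSpace.comap L ⊤ ≤ m ⊔ _) _ ⟨{x}, trivial, rfl⟩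

/-- `q^x_t` of the paper is `condDensity μ (𝓕 t) L x`. -/
noncomputable def condDensity (μ : Measure Ω) (m : MeasurableSpace Ω) (L : Ω → E) (x : E) (ω : Ω) :
    ℝ :=
  μ[{ω' | L ω' = x}.indicator (fun _ => (1 : ℝ))|m] ω / (μ {ω' | L ω' = x}).toReal

lemma div_condDensity_eq (μ : Measure Ω) (m : MeasurableSpace Ω) (L : Ω → E) (x : E) (g : Ω → ℝ)
    (ω : Ω) :
    g ω / condDensity μ m L x ω
      = g ω / μ[{ω' | L ω' = x}.indicator (fun _ => (1 : ℝ))|m] ω * (μ {ω' | L ω' = x}).toReal := by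
  rw [condDensity, div_div_eq_mul_div, mul_div_right_comm]

lemma stronglyMeasurable_condDensity (μ : Measure Ω) (L : Ω → E) (x : E) :
    StronglyMeasurable[m] (condDensity μ m L x) :=
  stronglyMeasurable_condExp.div stronglyMeasurable_const

variable [MeasurableSpace E] [MeasurableSingletonClass E] {μ : Measure Ω} [IsFiniteMeasure μ]
  {L : Ω → E} (hL : Measurable L) (hm : m ≤ m0)
include hL hm

section Atom

variable {x : E} (hp : ∀ᵐ ω ∂μ, 0 < μ[{ω' | L ω' = x}.indicator (fun _ => (1 : ℝ))|m] ω)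
  {g : Ω → ℝ} (hg : StronglyMeasurable[m] g)
include hp hg

lemma integrableOn_div_condDensity (hgi : Integrable g μ) :
    IntegrableOn (fun ω => g ω / condDensity μ m L x ω) {ω | L ω = x} μ := by
  have hgp := (integrableOn_iff_integrable_condExp_indicator_mul (S := {ω | L ω = x})
    (F := fun ω => g ω / μ[{ω' | L ω' = x}.indicator (fun _ => 1)|m] ω) hm
    (hL (measurableSet_singleton x)) (hg.div stronglyMeasurable_condExp)).2 (hgi.congr ?_)
  · simp_rw [div_condDensity_eq]
    exact hgp.mul_const _
  · filter_upwards [hp] with ω hω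
    rw [mul_div_cancel₀ _ hω.ne']

lemma setIntegral_div_condDensity :
    ∫ ω in {ω | L ω = x}, g ω / condDensity μ m L x ω ∂μ
      = (μ {ω | L ω = x}).toReal * ∫ ω, g ω ∂μ := by
  simp_rw [div_condDensity_eq]
  rw [integral_mul_const, setIntegral_eq_integral_condExp_indicator_mul (S := {ω | L ω = x})
    (F := fun ω => g ω / μ[{ω' | L ω' = x}.indicator (fun _ => 1)|m] ω) hm
    (hL (measurableSet_singleton x)) (hg.div stronglyMeasurable_condExp), mul_comm]
  congr 1
  refine integral_congr_ae ?_
  filter_upwards [hp] with ω hω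
  rw [mul_div_cancel₀ _ hω.ne']

end Atom

variable [Fintype E] (hp : ∀ x, ∀ᵐ ω ∂μ, 0 < μ[{ω' | L ω' = x}.indicator (fun _ => (1 : ℝ))|m] ω)
  {G : E → Ω → ℝ} (hG : ∀ x, StronglyMeasurable[m] (G x)) (hGi : ∀ x, Integrable (G x) μ)
include hp hG hGi

lemma integrable_comp_div_condDensity :
    Integrable (fun ω => G (L ω) ω / condDensity μ m L (L ω) ω) μ := by
  simp_rw [← sum_indicator_preimage_singleton L (fun x ω => G x ω / condDensity μ m L x ω)]
  exact integrable_finsetSum _ fun x _ =>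
    (integrableOn_div_condDensity hL hm (hp x) (hG x) (hGi x)).integrable_indicator
      (hL (measurableSet_singleton x))

lemma integral_comp_div_condDensity :
    ∫ ω, G (L ω) ω / condDensity μ m L (L ω) ω ∂μ
      = ∑ x, (μ {ω | L ω = x}).toReal * ∫ ω, G x ω ∂μ := by
  have hS (x : E) : MeasurableSet {ω | L ω = x} := hL (measurableSet_singleton x)
  simp_rw [← sum_indicator_preimage_singleton L (fun x ω => G x ω / condDensity μ m L x ω)]
  rw [integral_finsetSum _ fun x _ =>
    (integrableOn_div_condDensity hL hm (hp x) (hG x) (hGi x)).integrable_indicator (hS x)]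
  simp_rw [integral_indicator (hS _),
    setIntegral_div_condDensity hL hm (hp _) (hG _)]

end Enlargement

namespace MeasureTheory.Martingale

variable {Ω E ι : Type*} {m0 : MeasurableSpace Ω} [MeasurableSpace E] [MeasurableSingletonClass E]
  [Fintype E] [Preorder ι] {μ : Measure Ω} [IsFiniteMeasure μ] {ℱ : Filtration ι m0}
  {N : ι → Ω → ℝ} (hN : Martingale N ℱ μ) {L : Ω → E} (hL : Measurable L) {s t : ι} (hst : s ≤ t)
  (hps : ∀ x, ∀ᵐ ω ∂μ, 0 < μ[{ω' | L ω' = x}.indicator (fun _ => (1 : ℝ))|ℱ s] ω)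
  (hpt : ∀ x, ∀ᵐ ω ∂μ, 0 < μ[{ω' | L ω' = x}.indicator (fun _ => (1 : ℝ))|ℱ t] ω)
include hN hL hst hps hpt

lemma integral_mul_indicator_div_condDensity_eq {A : E → Set Ω}
    (hA : ∀ x, MeasurableSet[ℱ s] (A x)) (h : E → ℝ) :
    ∫ ω, h (L ω) * (A (L ω)).indicator (N t) ω / condDensity μ (ℱ t) L (L ω) ω ∂μ
      = ∫ ω, h (L ω) * (A (L ω)).indicator (N s) ω / condDensity μ (ℱ s) L (L ω) ω ∂μ := by
  have expand (u : ι) (hAu : ∀ x, MeasurableSet[ℱ u] (A x))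
      (hpu : ∀ x, ∀ᵐ ω ∂μ, 0 < μ[{ω' | L ω' = x}.indicator (fun _ => (1 : ℝ))|ℱ u] ω) :
      ∫ ω, h (L ω) * (A (L ω)).indicator (N u) ω / condDensity μ (ℱ u) L (L ω) ω ∂μ
        = ∑ x, (μ {ω | L ω = x}).toReal * (h x * ∫ ω in A x, N u ω ∂μ) := by
    rw [integral_comp_div_condDensity (G := fun x ω => h x * (A x).indicator (N u) ω) hL (ℱ.le u)
      hpu (fun x => ((hN.stronglyAdapted u).indicator (hAu x)).const_mul _)
      (fun x => ((hN.integrable u).indicator (ℱ.le u _ (hAu x))).const_mul _)]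
    simp_rw [integral_const_mul, integral_indicator (ℱ.le u _ (hAu _))]
  rw [expand t (fun x => ℱ.mono hst _ (hA x)) hpt, expand s hA hps]
  simp_rw [hN.setIntegral_eq hst (hA _)]

lemma condExp_sup_comap_div_condDensity :
    μ[fun ω => N t ω / condDensity μ (ℱ t) L (L ω) ω | ℱ s ⊔ MeasurableSpace.comap L ⊤]
      =ᵐ[μ] fun ω => N s ω / condDensity μ (ℱ s) L (L ω) ω := by
  have hint (u : ι)
      (hpu : ∀ x, ∀ᵐ ω ∂μ, 0 < μ[{ω' | L ω' = x}.indicator (fun _ => (1 : ℝ))|ℱ u] ω) :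
      Integrable (fun ω => N u ω / condDensity μ (ℱ u) L (L ω) ω) μ :=
    integrable_comp_div_condDensity (G := fun _ => N u) hL (ℱ.le u) hpu
      (fun _ => hN.stronglyAdapted u) (fun _ => hN.integrable u)
  have hmle : ℱ s ⊔ MeasurableSpace.comap L ⊤ ≤ m0 :=
    sup_le (ℱ.le s) (by rintro _ ⟨C, -, rfl⟩; exact hL (Set.toFinite C).measurableSet)
  refine (ae_eq_condExp_of_forall_setIntegral_eq hmle (hint t hpt)
    (fun _ _ _ => (hint s hps).integrableOn) (fun B hB _ => ?_)
    (stronglyMeasurable_sup_comap_eval fun x =>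
      (hN.stronglyAdapted s).div (stronglyMeasurable_condDensity μ L x)).aestronglyMeasurable).symm
  obtain ⟨A, hA, rfl⟩ := exists_eq_setOf_mem_of_measurableSet_sup_comap L hB
  have hB_indicator (u : ι) :
      {ω | ω ∈ A (L ω)}.indicator (fun ω => N u ω / condDensity μ (ℱ u) L (L ω) ω)
        = fun ω => 1 * (A (L ω)).indicator (N u) ω / condDensity μ (ℱ u) L (L ω) ω := by
    ext ω
    by_cases hω : ω ∈ A (L ω) <;> simp [hω]
  rw [← integral_indicator (hmle _ hB), ← integral_indicator (hmle _ hB), hB_indicator,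
    hB_indicator]
  exact (hN.integral_mul_indicator_div_condDensity_eq hL hst hps hpt hA fun _ => 1).symm

end MeasureTheory.Martingale

theorem value_info_stmt16_general
    {Ω : Type*} {m0 : MeasurableSpace Ω} (μ : Measure Ω) [IsProbabilityMeasure μ]
    (ℱ : Filtration ℝ m0)
    {E : Type*} [Fintype E] [MeasurableSpace E] [MeasurableSingletonClass E]
    (L : Ω → E) (hL : Measurable L)
    (T : ℝ)
    (q : ℝ → E → Ω → ℝ)
    (hq : ∀ t x, q t x =
      fun ω => (μ[Set.indicator {ω' | L ω' = x} (fun _ => (1 : ℝ)) | ℱ t]) ω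
        / (μ {ω' | L ω' = x}).toReal)
    (hqT : ∀ x : E, ∀ᵐ ω ∂μ, 0 < q T x ω)
    (N : ℝ → Ω → ℝ) (hN : Martingale N ℱ μ) :
    (∀ s t : ℝ, s ≤ t → t ≤ T →
      μ[(fun ω => N t ω / q t (L ω) ω) | (ℱ s) ⊔ (MeasurableSpace.comap L ⊤)]
        =ᵐ[μ] fun ω => N s ω / q s (L ω) ω)
    ∧ (∀ s t : ℝ, s ≤ t → t ≤ T → ∀ A : Set Ω, MeasurableSet[ℱ s] A →
        ∀ h : E → ℝ,
        ∫ ω, N t ω * h (L ω) * Set.indicator A (fun _ => (1 : ℝ)) ω / q t (L ω) ω ∂μ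
          = ∫ ω, N s ω * h (L ω) * Set.indicator A (fun _ => (1 : ℝ)) ω / q s (L ω) ω ∂μ) := by
  obtain rfl : q = fun t => condDensity μ (ℱ t) L := funext fun t => funext (hq t)
  have hp (t : ℝ) (ht : t ≤ T) (x : E) :
      ∀ᵐ ω ∂μ, 0 < μ[{ω' | L ω' = x}.indicator (fun _ => (1 : ℝ))|ℱ t] ω := by
    refine ae_pos_condExp_of_le (ℱ.mono ht) (ℱ.le T) ?_
    filter_upwards [hqT x] with ω hω
    exact ((div_pos_iff.1 hω).resolve_right fun h => h.2.not_ge ENNReal.toReal_nonneg).1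
  refine ⟨fun s t hst htT => ?_, fun s t hst htT A hA h => ?_⟩
  · exact hN.condExp_sup_comap_div_condDensity hL hst (hp s (hst.trans htT)) (hp t htT)
  · have hA_indicator (u : ℝ) :
        (fun ω => N u ω * h (L ω) * A.indicator (fun _ => 1) ω / condDensity μ (ℱ u) L (L ω) ω)
          = fun ω => h (L ω) * A.indicator (N u) ω / condDensity μ (ℱ u) L (L ω) ω := by
      ext ω
      by_cases hω : ω ∈ A <;> simp [hω, mul_comm]
    simp only [hA_indicator]
    exact hN.integral_mul_indicator_div_condDensity_eq hL hst (hp s (hst.trans htT)) (hp t htT)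
      (A := fun _ => A) (fun _ => hA) h

/-- Let `L` be a discrete random variable with finite range, all atoms
of positive probability, `q^x_t := P(L = x | 𝓕_t)/P(L = x)`, and suppose
`P(q^x_T > 0) = 1` for every `x`. If `N` is a bounded `𝓕`-martingale, then `N/q^L`
is a martingale for the initially enlarged filtration `𝓖_t = 𝓕_t ⊔ σ(L)` on `[0,T]`;
in particular `E[N_t h(L) 1_A / q^L_t] = E[N_s h(L) 1_A / q^L_s]` for `s ≤ t ≤ T`,
`A ∈ 𝓕_s` and bounded `h`. -/
theorem value_info_stmt16
    {Ω : Type*} {m0 : MeasurableSpace Ω} (μ : Measure Ω) [IsProbabilityMeasure μ]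
    (ℱ : Filtration ℝ m0)
    {E : Type*} [Fintype E] [MeasurableSpace E] [MeasurableSingletonClass E]
    (L : Ω → E) (hL : Measurable L)
    (hpos : ∀ x : E, 0 < μ {ω | L ω = x})
    (T : ℝ) (hT : 0 ≤ T)
    (q : ℝ → E → Ω → ℝ)
    (hq : ∀ t x, q t x =
      fun ω => (μ[Set.indicator {ω' | L ω' = x} (fun _ => (1 : ℝ)) | ℱ t]) ω
        / (μ {ω' | L ω' = x}).toReal)
    (hqT : ∀ x : E, ∀ᵐ ω ∂μ, 0 < q T x ω)
    (N : ℝ → Ω → ℝ) (hN : Martingale N ℱ μ)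
    (hNbdd : ∃ C : ℝ, ∀ t ω, |N t ω| ≤ C) :
    (∀ s t : ℝ, s ≤ t → t ≤ T →
      μ[(fun ω => N t ω / q t (L ω) ω) | (ℱ s) ⊔ (MeasurableSpace.comap L ⊤)]
        =ᵐ[μ] fun ω => N s ω / q s (L ω) ω)
    ∧ (∀ s t : ℝ, s ≤ t → t ≤ T → ∀ A : Set Ω, MeasurableSet[ℱ s] A →
        ∀ h : E → ℝ,
        ∫ ω, N t ω * h (L ω) * Set.indicator A (fun _ => (1 : ℝ)) ω / q t (L ω) ω ∂μ
          = ∫ ω, N s ω * h (L ω) * Set.indicator A (fun _ => (1 : ℝ)) ω / q s (L ω) ω ∂μ) :=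
  value_info_stmt16_general μ ℱ L hL T q hq hqT N hN
end

section
/- Suppose there exist utility indifference values for both logarithmic and all power utilities $U_p(x)=x^p/p$, $p\in(0,1)$, in the sense that the strictly positive random variable $q$ (with $\mathbb{E}[1/q]\le 1$, $\mathbb{E}[q^{p/(1-p)}]<\infty$ for all $p\in(0,1)$, and $\mathbb{E}[|\log q|]<\infty$) satisfies $\exp(\mathbb{E}[\log q]) = \mathbb{E}[q^{p/(1-p)}\,]^{(1-p)/p}$ for all $p\in(0,1)$. Then $q$ is almost surely equal to a constant $\ge 1$. -/
/-!
Taking `p = 1/2`, where `p / (1 - p) = 1`, the hypothesis reads `exp 𝔼[log q] = 𝔼[q]`: Jensen's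
inequality for `exp` applied to `log q` holds with equality, so by strict convexity `log q`, hence
`q`, is a.s. constant, equal to `c = exp 𝔼[log q] > 0`. Then `𝔼[1/q] = 1/c ≤ 1` gives `1 ≤ c`.
-/

open MeasureTheory ProbabilityTheory

section

variable {Ω : Type*} {m0 : MeasurableSpace Ω} {μ : Measure Ω} [IsProbabilityMeasure μ]

theorem ae_eq_integral_of_exp_integral_eq_integral_exp {g : Ω → ℝ} (hg : Integrable g μ)
    (hexp : Integrable (fun ω => Real.exp (g ω)) μ)
    (h : Real.exp (∫ ω, g ω ∂μ) = ∫ ω, Real.exp (g ω) ∂μ) :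
    g =ᵐ[μ] fun _ => ∫ ω, g ω ∂μ := by
  rcases strictConvexOn_exp.ae_eq_const_or_map_average_lt Real.continuous_exp.continuousOn
      isClosed_univ (.of_forall fun _ => Set.mem_univ _) hg hexp with hconst | hlt
  · rw [average_eq_integral] at hconst
    exact hconst
  · rw [average_eq_integral, average_eq_integral] at hlt
    exact absurd h hlt.ne

theorem ae_eq_exp_integral_log_of_exp_integral_log_eq_integral {q : Ω → ℝ}
    (hpos : ∀ᵐ ω ∂μ, 0 < q ω) (hq : Integrable q μ)
    (hlog : Integrable (fun ω => Real.log (q ω)) μ)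
    (h : Real.exp (∫ ω, Real.log (q ω) ∂μ) = ∫ ω, q ω ∂μ) :
    q =ᵐ[μ] fun _ => Real.exp (∫ ω, Real.log (q ω) ∂μ) := by
  have hexp_log : (fun ω => Real.exp (Real.log (q ω))) =ᵐ[μ] q := by
    filter_upwards [hpos] with ω hω using Real.exp_log hω
  have hlog_const := ae_eq_integral_of_exp_integral_eq_integral_exp hlog
    (hq.congr hexp_log.symm) (h.trans (integral_congr_ae hexp_log).symm)
  filter_upwards [hlog_const, hexp_log] with ω hω hω'
  rw [← hω', hω]

theorem one_le_of_ae_eq_const_of_integral_inv_le_one {q : Ω → ℝ} {c : ℝ} (hc : 0 < c)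
    (hq : q =ᵐ[μ] fun _ => c) (hinv : ∫ ω, (q ω)⁻¹ ∂μ ≤ 1) : 1 ≤ c := by
  have hinv_const : (fun ω => (q ω)⁻¹) =ᵐ[μ] fun _ => c⁻¹ := by
    filter_upwards [hq] with ω hω using by rw [hω]
  rw [integral_congr_ae hinv_const, integral_const, probReal_univ, one_smul] at hinv
  exact (inv_le_one₀ hc).mp hinv

end

theorem value_info_stmt18_general
    {Ω : Type*} {m0 : MeasurableSpace Ω} (μ : Measure Ω) [IsProbabilityMeasure μ]
    (q : Ω → ℝ) (hqpos : ∀ᵐ ω ∂μ, 0 < q ω)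
    (hinv1 : ∫ ω, (q ω)⁻¹ ∂μ ≤ 1)
    (hmom : ∀ p : ℝ, p ∈ Set.Ioo (0 : ℝ) 1 → Integrable (fun ω => q ω ^ (p / (1 - p))) μ)
    (hlogint : Integrable (fun ω => Real.log (q ω)) μ)
    (heq : ∀ p : ℝ, p ∈ Set.Ioo (0 : ℝ) 1 →
      Real.exp (∫ ω, Real.log (q ω) ∂μ)
        = (∫ ω, q ω ^ (p / (1 - p)) ∂μ) ^ ((1 - p) / p)) :
    ∃ c : ℝ, 1 ≤ c ∧ q =ᵐ[μ] fun _ => c := by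
  have hhalf : (1 / 2 : ℝ) ∈ Set.Ioo 0 1 := by norm_num
  have hexponent : (1 / 2 : ℝ) / (1 - 1 / 2) = 1 := by norm_num
  have hexponent' : (1 - 1 / 2 : ℝ) / (1 / 2) = 1 := by norm_num
  have hqint : Integrable q μ := by
    simpa only [hexponent, Real.rpow_one] using hmom _ hhalf
  have hkey : Real.exp (∫ ω, Real.log (q ω) ∂μ) = ∫ ω, q ω ∂μ := by
    simpa only [hexponent, hexponent', Real.rpow_one] using heq _ hhalf
  have hconst := ae_eq_exp_integral_log_of_exp_integral_log_eq_integral hqpos hqint hlogint hkey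
  exact ⟨_, one_le_of_ae_eq_const_of_integral_inv_le_one (Real.exp_pos _) hconst hinv1, hconst⟩

/-- Abstract core of the universal-indifference-value characterization.
If `q > 0` a.s. with `E[1/q] ≤ 1`, `E[q^{p/(1-p)}] < ∞` for all `p ∈ (0,1)`,
`log q` integrable, and the log- and power-utility indifference values agree:
`exp(E[log q]) = E[q^{p/(1-p)}]^{(1-p)/p}` for all `p ∈ (0,1)`, then `q` is a.s.
equal to a constant `≥ 1`. -/
theorem value_info_stmt18
    {Ω : Type*} {m0 : MeasurableSpace Ω} (μ : Measure Ω) [IsProbabilityMeasure μ]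
    (q : Ω → ℝ) (hqmeas : Measurable q) (hqpos : ∀ᵐ ω ∂μ, 0 < q ω)
    (hinvint : Integrable (fun ω => (q ω)⁻¹) μ)
    (hinv1 : ∫ ω, (q ω)⁻¹ ∂μ ≤ 1)
    (hmom : ∀ p : ℝ, p ∈ Set.Ioo (0 : ℝ) 1 → Integrable (fun ω => q ω ^ (p / (1 - p))) μ)
    (hlogint : Integrable (fun ω => Real.log (q ω)) μ)
    (heq : ∀ p : ℝ, p ∈ Set.Ioo (0 : ℝ) 1 →
      Real.exp (∫ ω, Real.log (q ω) ∂μ)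
        = (∫ ω, q ω ^ (p / (1 - p)) ∂μ) ^ ((1 - p) / p)) :
    ∃ c : ℝ, 1 ≤ c ∧ q =ᵐ[μ] fun _ => c :=
  value_info_stmt18_general (m0 := m0) μ q hqpos hinv1 hmom hlogint heq
end
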